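/- arXiv:2305.04607 — 3 statements merged into one kernel-verified Lean document; each statement's English description precedes it below -/
import Mathlib

section
/- Let (K,e) be a non-archimedean ordered exponential field whose exponential satisfies the growth axiom, and let v be the natural valuation on K. If x, y are positive infinite elements with v(x) < v(y), then v(e(x)) < v(e(y)). -/
/-! Write `e x = e (x - y) * e y`. Since `x > 2y`, the difference `x - y` exceeds the infinite
element `y`, and the growth axiom for `n = 1` gives `e a > a` for `a ≥ 1`; hence `e (x - y)` is
infinite as well, which is exactly the claim. -/

theorem lt_self_of_growth {K : Type*} [Semiring K] [Preorder K] {e : K → K}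
    (e_GA : ∀ (n : ℕ) (a : K), (n : K) ^ 2 ≤ a → a ^ n < e a)
    {a : K} (ha : 1 ≤ a) : a < e a := by
  simpa using e_GA 1 a (by simpa using ha)

theorem natCast_mul_lt_of_lt_sub {K : Type*} [Ring K] [PartialOrder K] [IsStrictOrderedRing K]
    {e : K → K} (e_pos : ∀ x : K, 0 < e x)
    (e_add : ∀ x y : K, e (x + y) = e x * e y) (hgrowth : ∀ a : K, 1 ≤ a → a < e a)
    {x y : K} {n : ℕ} (hn : (n : K) < x - y) (h1 : 1 ≤ x - y) : (n : K) * e y < e x :=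
  calc (n : K) * e y < e (x - y) * e y :=
        mul_lt_mul_of_pos_right (hn.trans (hgrowth _ h1)) (e_pos y)
    _ = e x := by rw [← e_add, sub_add_cancel]

theorem stmt_9_general {K : Type*} [Field K] [LinearOrder K] [IsStrictOrderedRing K] (e : K → K)
    (e_pos : ∀ x : K, 0 < e x)
    (e_add : ∀ x y : K, e (x + y) = e x * e y)
    (e_GA : ∀ (n : ℕ) (a : K), (n : K) ^ 2 ≤ a → a ^ n < e a)
    (x y : K) (hy : ∀ n : ℕ, (n : K) < y)
    (hv : ∀ n : ℕ, (n : K) * y < x) :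
    ∀ n : ℕ, (n : K) * e y < e x := by
  intro n
  have hy_lt : y < x - y := by
    have := hv 2
    push_cast at this
    linarith
  have h1 : (1 : K) ≤ x - y := by
    have := hy 1
    push_cast at this
    linarith
  exact natCast_mul_lt_of_lt_sub e_pos e_add (fun a ha ↦ lt_self_of_growth e_GA ha)
    ((hy n).trans hy_lt) h1

/-- Let (K,e) be a non-archimedean ordered exponential field with e satisfying
the growth axiom. If x, y are positive infinite with v(x) < v(y)
(i.e. x > n·y for all n), then v(e(x)) < v(e(y)) (i.e. e(x) > n·e(y) for all n). -/
theorem stmt_9 {K : Type*} [Field K] [LinearOrder K] [IsStrictOrderedRing K] (e : K → K)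
    (e_pos : ∀ x : K, 0 < e x)
    (e_mono : StrictMono e)
    (e_add : ∀ x y : K, e (x + y) = e x * e y)
    (e_surj : ∀ y : K, 0 < y → ∃ x, e x = y)
    (e_GA : ∀ (n : ℕ) (a : K), (n : K) ^ 2 ≤ a → a ^ n < e a)
    (nonarch : ∃ z : K, ∀ n : ℕ, (n : K) < z)
    (x y : K) (hx : ∀ n : ℕ, (n : K) < x) (hy : ∀ n : ℕ, (n : K) < y)
    (hv : ∀ n : ℕ, (n : K) * y < x) :
    ∀ n : ℕ, (n : K) * e y < e x :=
  stmt_9_general e e_pos e_add e_GA x y hy hv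
end

section
/- Let (K,e,T) be a non-archimedean ordered transexponential field. Then the induced residue map T̄ : K̄ → K̄^{>0}, defined by T̄(ā) = T(a)‾ for a in the valuation ring R_v, is a well-defined transexponential on the residue field K̄ compatible with the residue exponential ē; that is, (K̄, ē, T̄) is again an ordered transexponential field. -/
/-!
Write `v = ArchimedeanClass.mk` for the natural valuation, so that `R_v = {0 ≤ v}` and
`I_v = {0 < v}`. Everything follows from two facts: `v (T a) = 0` and
`v (T a - T b) = v (a - b)` for `a, b ∈ R_v`, i.e. `T` maps `R_v` into its units and is a
`v`-isometry there. For `e` this is the Taylor axiom: `e a - e b = e b * (e (a - b) - 1)` with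
`e b` a unit and `v (e d - 1) = v d`. Since `T = e` on `[0, 1]` and `T (x + 1) = e (T x)`, the
isometry property propagates to `[0, m]` by induction, intervals being glued by monotonicity of
`T`; it reaches `[-m, 0]` through `T x = (T (-x))⁻¹`, inversion being an isometry on units.
Surjectivity of the residue map only needs `n ≤ T n`, which follows from `t + 1 ≤ e t` for
`t ≥ 2` (by `e 1 ≥ 9/4` on `[2, 4]` and the growth axiom beyond).
-/

/-- An ordered transexponential field structure on an ordered field `K`:
`e` is a (GAT₁)-exponential and `T` a compatible transexponential. -/
structure IsOTF {K : Type*} [Field K] [LinearOrder K] [IsStrictOrderedRing K] (e T : K → K) : Prop where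
  e_pos : ∀ x : K, 0 < e x
  e_mono : StrictMono e
  e_add : ∀ x y : K, e (x + y) = e x * e y
  e_surj : ∀ y : K, 0 < y → ∃ x, e x = y
  e_GA : ∀ (n : ℕ) (a : K), (n : K) ^ 2 ≤ a → a ^ n < e a
  e_T1 : ∀ a : K, 0 < |a| → |a| ≤ 1 → |e a - (1 + a)| < a ^ 2
  T_pos : ∀ x : K, 0 < T x
  T_mono : StrictMono T
  T_surj : ∀ y : K, 0 < y → ∃ x, T x = y
  T_eq_e : ∀ x : K, 0 ≤ x → x ≤ 1 → T x = e x
  T_succ : ∀ x : K, 0 < x → T (x + 1) = e (T x)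
  T_neg : ∀ x : K, x < 0 → T x * T (-x) = 1

/-- `x` is finite (lies in the valuation ring `R_v` of the natural valuation). -/
def IsFinElt {K : Type*} [Field K] [LinearOrder K] [IsStrictOrderedRing K] (x : K) : Prop :=
  ∃ n : ℕ, |x| ≤ (n : K)

/-- `x` is infinitesimal (lies in the valuation ideal `I_v`). -/
def IsInfml {K : Type*} [Field K] [LinearOrder K] [IsStrictOrderedRing K] (x : K) : Prop :=
  ∀ n : ℕ, 0 < n → |x| < ((n : K))⁻¹

open ArchimedeanClass Set

section Valuation
variable {K : Type*} [Field K] [LinearOrder K] [IsStrictOrderedRing K]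

theorem isFinElt_iff_mk_nonneg {x : K} : IsFinElt x ↔ 0 ≤ mk x := by
  rw [← mk_one, mk_le_mk]
  simp [IsFinElt]

theorem isInfml_iff_mk_pos {x : K} : IsInfml x ↔ 0 < mk x := by
  rw [← mk_one, mk_lt_mk]
  refine forall_congr' fun n => ?_
  rcases Nat.eq_zero_or_pos n with rfl | hn
  · simp
  · have hn' : (0 : K) < n := by exact_mod_cast hn
    rw [← one_div, lt_div_iff₀ hn']
    simp [hn, nsmul_eq_mul, mul_comm]

theorem mk_eq_zero_of_le_of_le {x y z : K} (hy : 0 < y) (hyx : y ≤ x) (hxz : x ≤ z)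
    (hy0 : mk y = 0) (hz0 : mk z = 0) : mk x = 0 := by
  refine le_antisymm (hy0 ▸ mk_le_mk_of_abs ?_) (hz0 ▸ mk_le_mk_of_abs ?_)
  · rw [abs_of_pos hy, abs_of_pos (hy.trans_le hyx)]; exact hyx
  · rw [abs_of_pos (hy.trans_le hyx), abs_of_pos (hy.trans_le (hyx.trans hxz))]; exact hxz

theorem mk_sub_eq_min_of_le {a b c : K} (hac : a ≤ c) (hcb : c ≤ b) :
    mk (b - a) = min (mk (b - c)) (mk (c - a)) := by
  refine le_antisymm (le_min (mk_le_mk_of_abs ?_) (mk_le_mk_of_abs ?_)) ?_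
  · rw [abs_of_nonneg (by linarith), abs_of_nonneg (by linarith)]; linarith
  · rw [abs_of_nonneg (by linarith), abs_of_nonneg (by linarith)]; linarith
  · simpa using min_le_mk_add (b - c) (c - a)

theorem mk_inv_sub_inv {u w : K} (hu : mk u = 0) (hw : mk w = 0) :
    mk (u⁻¹ - w⁻¹) = mk (u - w) := by
  have hu' : u ≠ 0 := by rintro rfl; simp at hu
  have hw' : w ≠ 0 := by rintro rfl; simp at hw
  rw [inv_sub_inv hu' hw', mk_div, mk_mul, hu, hw, mk_sub_comm]
  simp

theorem mk_nonneg_of_mem_Icc {p q x : K} (hp : 0 ≤ mk p) (hq : 0 ≤ mk q) (hx : x ∈ Icc p q) :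
    0 ≤ mk x :=
  (le_min hp hq).trans (min_le_mk_of_le_of_le hx.1 hx.2)

def MkIsometryOn (f : K → K) (s : Set K) : Prop :=
  ∀ a ∈ s, ∀ b ∈ s, mk (f a - f b) = mk (a - b)

theorem MkIsometryOn.of_le {f : K → K} {s : Set K}
    (h : ∀ a ∈ s, ∀ b ∈ s, a ≤ b → mk (f b - f a) = mk (b - a)) : MkIsometryOn f s := by
  intro a ha b hb
  rcases le_total a b with hab | hba
  · rw [mk_sub_comm, h a ha b hb hab, mk_sub_comm]
  · exact h b hb a ha hba

theorem MkIsometryOn.Icc_union_Icc {f : K → K} (hf : Monotone f) {p q r : K}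
    (h₁ : MkIsometryOn f (Icc p q)) (h₂ : MkIsometryOn f (Icc q r)) :
    MkIsometryOn f (Icc p r) := by
  refine .of_le fun a ha b hb hab => ?_
  rcases le_total b q with hbq | hqb
  · exact h₁ b ⟨hb.1, hbq⟩ a ⟨ha.1, hab.trans hbq⟩
  rcases le_total q a with hqa | haq
  · exact h₂ b ⟨hqa.trans hab, hb.2⟩ a ⟨hqa, ha.2⟩
  rw [mk_sub_eq_min_of_le haq hqb, mk_sub_eq_min_of_le (hf haq) (hf hqb),
    h₁ q ⟨ha.1.trans haq, le_rfl⟩ a ⟨ha.1, haq⟩,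
    h₂ b ⟨hqb, hb.2⟩ q ⟨le_rfl, hqb.trans hb.2⟩]

end Valuation

namespace IsOTF
variable {K : Type*} [Field K] [LinearOrder K] [IsStrictOrderedRing K] {e T : K → K}
  (h : IsOTF e T)
include h

theorem e_zero : e 0 = 1 := by
  have h00 := h.e_add 0 0
  rw [add_zero] at h00
  exact (mul_eq_left₀ (h.e_pos 0).ne').1 h00.symm

theorem e_neg (x : K) : e (-x) = (e x)⁻¹ :=
  eq_inv_of_mul_eq_one_right (by rw [← h.e_add, add_neg_cancel, h.e_zero])

theorem e_natCast_mul (n : ℕ) (x : K) : e (n * x) = e x ^ n := by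
  induction n with
  | zero => simp [h.e_zero]
  | succ n ih => rw [Nat.cast_succ, add_one_mul, h.e_add, ih, pow_succ]

theorem abs_e_sub_one_sub_le {d : K} (hd : |d| ≤ 1) : |e d - 1 - d| ≤ d ^ 2 := by
  rcases eq_or_ne d 0 with rfl | hd0
  · simp [h.e_zero]
  · rw [sub_sub]; exact (h.e_T1 d (abs_pos.2 hd0) hd).le

theorem nine_fourths_le_e_one : (9 / 4 : K) ≤ e 1 := by
  have h8 : (71 / 64 : K) ≤ e (1 / 8) := by
    have := abs_le.1 (h.abs_e_sub_one_sub_le (d := 1 / 8) (by norm_num [abs_of_pos]))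
    linarith
  calc (9 / 4 : K) ≤ (71 / 64) ^ 8 := by norm_num
    _ ≤ e (1 / 8) ^ 8 := pow_le_pow_left₀ (by norm_num) h8 8
    _ = e 1 := by rw [← h.e_natCast_mul]; norm_num

theorem e_one_le_three : e 1 ≤ 3 := by
  have := abs_le.1 (h.abs_e_sub_one_sub_le (d := 1) (by norm_num))
  linarith

theorem add_one_le_e {t : K} (ht : 2 ≤ t) : t + 1 ≤ e t := by
  rcases le_total t 4 with ht4 | ht4
  · have he2 : e 2 = e 1 ^ 2 := by rw [← h.e_natCast_mul]; norm_num
    have := h.e_mono.monotone ht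
    nlinarith [h.nine_fourths_le_e_one]
  · have := h.e_GA 2 t (by norm_num; linarith)
    nlinarith

theorem mk_e_eq_zero {x : K} (hx : 0 ≤ ArchimedeanClass.mk x) :
    ArchimedeanClass.mk (e x) = 0 := by
  obtain ⟨n, hn⟩ := isFinElt_iff_mk_nonneg.2 hx
  have he1 : ArchimedeanClass.mk (e 1) = 0 :=
    mk_eq_zero_of_le_of_le one_pos (by linarith [h.nine_fourths_le_e_one]) h.e_one_le_three
      mk_one mk_ofNat
  have hen : ArchimedeanClass.mk (e n) = 0 := by
    rw [← mul_one (n : K), h.e_natCast_mul, mk_pow, he1, smul_zero]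
  refine mk_eq_zero_of_le_of_le (h.e_pos _) (h.e_mono.monotone (neg_le_of_abs_le hn))
    (h.e_mono.monotone (le_of_abs_le hn)) ?_ hen
  rw [h.e_neg, mk_inv, hen, neg_zero]

theorem le_abs_e_sub_one {δ d : K} (hδ : 0 < δ) (hδ2 : δ ≤ 1 / 2) (hd : δ ≤ |d|) :
    δ ≤ 2 * |e d - 1| := by
  rcases le_abs'.1 hd with hd | hd
  · have hT := abs_le.1 (h.abs_e_sub_one_sub_le (d := -δ)
      (by rw [abs_neg, abs_of_pos hδ]; linarith))
    have := h.e_mono.monotone (show d ≤ -δ by linarith)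
    rw [abs_of_neg (by nlinarith)]
    nlinarith
  · have hT := abs_le.1 (h.abs_e_sub_one_sub_le (d := δ) (by rw [abs_of_pos hδ]; linarith))
    have := h.e_mono.monotone hd
    rw [abs_of_pos (by nlinarith)]
    nlinarith

theorem mk_e_sub_one_of_mk_eq_zero {d : K} (hd : ArchimedeanClass.mk d = 0) :
    ArchimedeanClass.mk (e d - 1) = 0 := by
  refine le_antisymm ?_ ((le_min (h.mk_e_eq_zero hd.ge).ge mk_one.ge).trans (min_le_mk_sub _ _))
  obtain ⟨n, hn⟩ := mk_le_mk.1 (show ArchimedeanClass.mk d ≤ ArchimedeanClass.mk (1 : K) by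
    rw [mk_one, hd])
  rw [abs_one, nsmul_eq_mul] at hn
  have hn1 : (1 : K) ≤ n := by
    rcases n with _ | n
    · norm_num at hn
    · exact_mod_cast Nat.le_add_left 1 n
  have key := h.le_abs_e_sub_one (δ := (2 * n)⁻¹) (by positivity)
    (by rw [one_div]; exact inv_anti₀ two_pos (by linarith))
    (by rw [inv_le_iff_one_le_mul₀ (by positivity)]; nlinarith [abs_nonneg d])
  rw [inv_le_iff_one_le_mul₀ (by positivity)] at key
  rw [← mk_one]
  exact mk_le_mk.2 ⟨4 * n, by rw [abs_one, nsmul_eq_mul]; push_cast; linarith⟩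

theorem mk_e_sub_one_of_mk_pos {d : K} (hd : 0 < ArchimedeanClass.mk d) :
    ArchimedeanClass.mk (e d - 1) = ArchimedeanClass.mk d := by
  rcases eq_or_ne d 0 with rfl | hd0
  · simp [h.e_zero]
  have hd1 : |d| ≤ 1 := by
    simpa using (mk_lt_mk.1 (show ArchimedeanClass.mk (1 : K) < ArchimedeanClass.mk d by
      rwa [mk_one]) 1).le
  have hlt : ArchimedeanClass.mk d < ArchimedeanClass.mk (e d - 1 - d) := by
    refine lt_of_lt_of_le ?_
      (mk_le_mk_of_abs ((h.abs_e_sub_one_sub_le hd1).trans (le_abs_self _)))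
    rw [mk_pow, two_nsmul]
    simpa using (add_lt_add_iff_right_of_ne_top (mk_eq_top_iff.not.2 hd0)).2 hd
  simpa using mk_add_eq_mk_left hlt

theorem mk_e_sub_one {d : K} (hd : 0 ≤ ArchimedeanClass.mk d) :
    ArchimedeanClass.mk (e d - 1) = ArchimedeanClass.mk d := by
  rcases hd.eq_or_lt with hd | hd
  · rw [← hd, h.mk_e_sub_one_of_mk_eq_zero hd.symm]
  · exact h.mk_e_sub_one_of_mk_pos hd

theorem mkIsometryOn_e : MkIsometryOn e {x | 0 ≤ ArchimedeanClass.mk x} := by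
  intro a ha b hb
  have hab : 0 ≤ ArchimedeanClass.mk (a - b) := (le_min ha hb).trans (min_le_mk_sub a b)
  have hsplit : e a - e b = e b * (e (a - b) - 1) := by
    rw [mul_sub, ← h.e_add, add_sub_cancel, mul_one]
  rw [hsplit, mk_mul, h.mk_e_eq_zero hb, h.mk_e_sub_one hab, zero_add]

theorem T_zero : T 0 = 1 := by
  rw [h.T_eq_e 0 le_rfl zero_le_one, h.e_zero]

theorem T_add_one {x : K} (hx : 0 ≤ x) : T (x + 1) = e (T x) := by
  rcases hx.eq_or_lt with rfl | hx
  · rw [zero_add, h.T_eq_e 1 zero_le_one le_rfl, h.T_zero]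
  · exact h.T_succ x hx

theorem T_of_nonpos {x : K} (hx : x ≤ 0) : T x = (T (-x))⁻¹ := by
  refine eq_inv_of_mul_eq_one_left ?_
  rcases hx.eq_or_lt with rfl | hx
  · simp [h.T_zero]
  · exact h.T_neg x hx

theorem mk_T_natCast (n : ℕ) : ArchimedeanClass.mk (T n) = 0 := by
  induction n with
  | zero => rw [Nat.cast_zero, h.T_zero, mk_one]
  | succ n ih => rw [Nat.cast_succ, h.T_add_one n.cast_nonneg, h.mk_e_eq_zero ih.ge]

theorem mk_T_eq_zero {x : K} (hx : 0 ≤ ArchimedeanClass.mk x) :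
    ArchimedeanClass.mk (T x) = 0 := by
  obtain ⟨n, hn⟩ := isFinElt_iff_mk_nonneg.2 hx
  refine mk_eq_zero_of_le_of_le (h.T_pos _) (h.T_mono.monotone (neg_le_of_abs_le hn))
    (h.T_mono.monotone (le_of_abs_le hn)) ?_ (h.mk_T_natCast n)
  rw [h.T_of_nonpos (by simp), neg_neg, mk_inv, h.mk_T_natCast, neg_zero]

theorem natCast_le_T (n : ℕ) : (n : K) ≤ T n := by
  suffices ∀ k : ℕ, (k : K) + 2 ≤ T (k + 1) by
    rcases n with _ | k
    · simp [h.T_zero]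
    · push_cast; linarith [this k]
  intro k
  induction k with
  | zero =>
    rw [Nat.cast_zero, zero_add, zero_add, h.T_eq_e 1 zero_le_one le_rfl]
    linarith [h.nine_fourths_le_e_one]
  | succ k ih =>
    rw [Nat.cast_succ, h.T_add_one (by positivity)]
    linarith [h.add_one_le_e (show (2 : K) ≤ T (k + 1) by linarith [k.cast_nonneg (α := K)])]

theorem mkIsometryOn_T_Icc_zero_natCast (m : ℕ) : MkIsometryOn T (Icc 0 (m : K)) := by
  induction m with
  | zero =>
    rintro a ⟨ha0, ha⟩ b ⟨hb0, hb⟩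
    rw [Nat.cast_zero] at ha hb
    simp [le_antisymm ha ha0, le_antisymm hb hb0]
  | succ m ih =>
    have h01 : MkIsometryOn T (Icc 0 1) := fun a ha b hb => by
      rw [h.T_eq_e a ha.1 ha.2, h.T_eq_e b hb.1 hb.2]
      exact h.mkIsometryOn_e a (mk_nonneg_of_mem_Icc (by simp) mk_one.ge ha)
        b (mk_nonneg_of_mem_Icc (by simp) mk_one.ge hb)
    have hshift : MkIsometryOn T (Icc 1 (m + 1)) := by
      rintro a ⟨ha1, ha⟩ b ⟨hb1, hb⟩
      have ha' : a - 1 ∈ Icc 0 (m : K) := ⟨by linarith, by linarith⟩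
      have hb' : b - 1 ∈ Icc 0 (m : K) := ⟨by linarith, by linarith⟩
      have hfin : ∀ x ∈ Icc 0 (m : K), 0 ≤ ArchimedeanClass.mk (T x) := fun x hx =>
        (h.mk_T_eq_zero (mk_nonneg_of_mem_Icc (by simp) (mk_natCast_nonneg m) hx)).ge
      rw [← sub_add_cancel a 1, ← sub_add_cancel b 1, h.T_add_one ha'.1, h.T_add_one hb'.1,
        h.mkIsometryOn_e _ (hfin _ ha') _ (hfin _ hb'), ih _ ha' _ hb', sub_sub_sub_cancel_right,
        sub_add_cancel, sub_add_cancel]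
    simpa using h01.Icc_union_Icc h.T_mono.monotone hshift

theorem mkIsometryOn_T_Icc_neg_natCast (m : ℕ) : MkIsometryOn T (Icc (-m : K) 0) := by
  rintro a ⟨ha, ha0⟩ b ⟨hb, hb0⟩
  have hpos := h.mkIsometryOn_T_Icc_zero_natCast m
  have ha' : -a ∈ Icc 0 (m : K) := ⟨by linarith, by linarith⟩
  have hb' : -b ∈ Icc 0 (m : K) := ⟨by linarith, by linarith⟩
  have hfin : ∀ x ∈ Icc 0 (m : K), ArchimedeanClass.mk (T x) = 0 := fun x hx =>
    h.mk_T_eq_zero (mk_nonneg_of_mem_Icc (by simp) (mk_natCast_nonneg m) hx)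
  rw [h.T_of_nonpos ha0, h.T_of_nonpos hb0, mk_inv_sub_inv (hfin _ ha') (hfin _ hb'),
    hpos _ ha' _ hb', neg_sub_neg, mk_sub_comm]

theorem mk_T_sub_T {a b : K} (ha : 0 ≤ ArchimedeanClass.mk a)
    (hb : 0 ≤ ArchimedeanClass.mk b) :
    ArchimedeanClass.mk (T a - T b) = ArchimedeanClass.mk (a - b) := by
  obtain ⟨m, hm⟩ := isFinElt_iff_mk_nonneg.2 ha
  obtain ⟨n, hn⟩ := isFinElt_iff_mk_nonneg.2 hb
  have hI := (h.mkIsometryOn_T_Icc_neg_natCast (m + n)).Icc_union_Icc h.T_mono.monotone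
    (h.mkIsometryOn_T_Icc_zero_natCast (m + n))
  exact hI a (abs_le.1 (hm.trans (by exact_mod_cast Nat.le_add_right m n)))
    b (abs_le.1 (hn.trans (by exact_mod_cast Nat.le_add_left n m)))

theorem exists_T_eq_of_mk_eq_zero {c : K} (hc : 0 < c) (hc0 : ArchimedeanClass.mk c = 0) :
    ∃ a, 0 ≤ ArchimedeanClass.mk a ∧ T a = c := by
  obtain ⟨n, hn⟩ := isFinElt_iff_mk_nonneg.2 hc0.ge
  obtain ⟨n', hn'⟩ := (isFinElt_iff_mk_nonneg (x := c⁻¹)).2 (by rw [mk_inv, hc0, neg_zero])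
  rw [abs_of_pos hc] at hn
  rw [abs_of_pos (inv_pos.2 hc)] at hn'
  have hN : c ≤ (n + n' : ℕ) ∧ c⁻¹ ≤ (n + n' : ℕ) := by
    push_cast; constructor <;> linarith [n.cast_nonneg (α := K), n'.cast_nonneg (α := K)]
  set N : ℕ := n + n'
  have hN0 : (0 : K) < N := (inv_pos.2 hc).trans_le hN.2
  obtain ⟨x, rfl⟩ := h.T_surj c hc
  refine ⟨x, isFinElt_iff_mk_nonneg.1 ⟨N, abs_le.2 ⟨?_, ?_⟩⟩, rfl⟩
  · rw [← h.T_mono.le_iff_le, h.T_of_nonpos (by linarith), neg_neg]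
    calc (T N)⁻¹ ≤ (N : K)⁻¹ := inv_anti₀ hN0 (h.natCast_le_T N)
      _ ≤ T x := inv_le_of_inv_le₀ (h.T_pos x) hN.2
  · exact h.T_mono.le_iff_le.1 (hN.1.trans (h.natCast_le_T N))

end IsOTF

theorem stmt_11_general {K : Type*} [Field K] [LinearOrder K] [IsStrictOrderedRing K] (e T : K → K)
    (hKT : IsOTF e T) :
    -- T̄ is well defined
    (∀ a b : K, IsFinElt a → IsFinElt b → IsInfml (a - b) → IsInfml (T a - T b)) ∧
    -- T̄ maps K̄ into K̄^{>0}
    (∀ a : K, IsFinElt a → IsFinElt (T a) ∧ 0 < T a ∧ ¬ IsInfml (T a)) ∧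
    -- T̄ is order-preserving (hence injective)
    (∀ a b : K, IsFinElt a → IsFinElt b → a < b → ¬ IsInfml (b - a) →
      T a < T b ∧ ¬ IsInfml (T b - T a)) ∧
    -- T̄ is surjective onto K̄^{>0}
    (∀ c : K, IsFinElt c → 0 < c → ¬ IsInfml c →
      ∃ a : K, IsFinElt a ∧ IsInfml (T a - c)) ∧
    -- T̄ = ē on [0,1]
    (∀ a : K, IsFinElt a → 0 ≤ a → a ≤ 1 → IsInfml (T a - e a)) ∧
    -- T̄(x+1) = ē(T̄(x)) for x > 0
    (∀ a : K, IsFinElt a → 0 < a → ¬ IsInfml a → IsInfml (T (a + 1) - e (T a))) ∧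
    -- T̄(x)·T̄(−x) = 1 for x < 0
    (∀ a : K, IsFinElt a → a < 0 → ¬ IsInfml a → IsInfml (T a * T (-a) - 1)) := by
  simp only [isFinElt_iff_mk_nonneg, isInfml_iff_mk_pos]
  refine ⟨fun a b ha hb hab => ?_, fun a ha => ?_, fun a b ha hb hab hba => ?_,
    fun c hc hc0 hcinf => ?_, fun a _ h0 h1 => ?_, fun a _ h0 _ => ?_, fun a _ h0 _ => ?_⟩
  · rwa [hKT.mk_T_sub_T ha hb]
  · have hTa := hKT.mk_T_eq_zero ha
    exact ⟨hTa.ge, hKT.T_pos a, hTa.not_gt⟩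
  · exact ⟨hKT.T_mono hab, by rwa [hKT.mk_T_sub_T hb ha]⟩
  · obtain ⟨a, ha, rfl⟩ := hKT.exists_T_eq_of_mk_eq_zero hc0 (le_antisymm (not_lt.1 hcinf) hc)
    exact ⟨a, ha, by simp⟩
  · simp [hKT.T_eq_e a h0 h1]
  · simp [hKT.T_succ a h0]
  · simp [hKT.T_neg a h0]

/-- The residue map T̄ (given on representatives a ∈ R_v by ā ↦ T(a)‾) is a
well-defined transexponential on the residue field K̄ compatible with ē:
(K̄, ē, T̄) is an ordered transexponential field.  All residue-field conditions
are expressed via representatives, equality in K̄ being `IsInfml` of the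
difference of representatives. -/
theorem stmt_11 {K : Type*} [Field K] [LinearOrder K] [IsStrictOrderedRing K] (e T : K → K)
    (hKT : IsOTF e T) (nonarch : ∃ z : K, ∀ n : ℕ, (n : K) < z) :
    -- T̄ is well defined
    (∀ a b : K, IsFinElt a → IsFinElt b → IsInfml (a - b) → IsInfml (T a - T b)) ∧
    -- T̄ maps K̄ into K̄^{>0}
    (∀ a : K, IsFinElt a → IsFinElt (T a) ∧ 0 < T a ∧ ¬ IsInfml (T a)) ∧
    -- T̄ is order-preserving (hence injective)
    (∀ a b : K, IsFinElt a → IsFinElt b → a < b → ¬ IsInfml (b - a) →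
      T a < T b ∧ ¬ IsInfml (T b - T a)) ∧
    -- T̄ is surjective onto K̄^{>0}
    (∀ c : K, IsFinElt c → 0 < c → ¬ IsInfml c →
      ∃ a : K, IsFinElt a ∧ IsInfml (T a - c)) ∧
    -- T̄ = ē on [0,1]
    (∀ a : K, IsFinElt a → 0 ≤ a → a ≤ 1 → IsInfml (T a - e a)) ∧
    -- T̄(x+1) = ē(T̄(x)) for x > 0
    (∀ a : K, IsFinElt a → 0 < a → ¬ IsInfml a → IsInfml (T (a + 1) - e (T a))) ∧
    -- T̄(x)·T̄(−x) = 1 for x < 0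
    (∀ a : K, IsFinElt a → a < 0 → ¬ IsInfml a → IsInfml (T a * T (-a) - 1)) :=
  stmt_11_general e T hKT
end

section
/- Let (K,e,T) be a non-archimedean ordered transexponential field and L = T⁻¹. For every positive infinite a ∈ K and every n ∈ ℕ with n ≥ 2, one has n·L(a) > L(aⁿ), and consequently X_T(n·v(a)) = X_T(v(a)) where X_T(v(x)) := v(L(x)); that is, X_T is constant on archimedean classes of the value group: v_G(g) = v_G(h) implies X_T(g) = X_T(h) for g, h ∈ G^{<0}. -/
/-- `x` is a positive infinite element of `K` (equivalently, v(x) < 0, x > 0). -/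
def PosInf {K : Type*} [Field K] [LinearOrder K] [IsStrictOrderedRing K] (x : K) : Prop :=
  ∀ n : ℕ, (n : K) < x

/-- For positive x, y, `VEq x y` expresses v(x) = v(y) under the natural
valuation: x and y are multiplicatively archimedean equivalent. -/
def VEq {K : Type*} [Field K] [LinearOrder K] [IsStrictOrderedRing K] (x y : K) : Prop :=
  ∃ n : ℕ, x ≤ (n : K) * y ∧ y ≤ (n : K) * x

/-!
Since `T` is strictly increasing and `L` inverts it on the positives, `L y < x ↔ y < T x`.
For `a` positive infinite we have `n² ≤ a`, so the growth axiom (GA) gives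
`aⁿ < e a = e (T (L a)) = T (L a + 1)`, while `L a + 1 < n · L a` because `L a > 1`
(`a` exceeds the finite element `T 1 = e 1`). Hence `L a ≤ L (aⁿ) < n · L a`, which is
`v (L (aⁿ)) = v (L a)`. If `a ≤ k bⁿ` then `a ≤ bⁿ⁺¹`, so
`L a ≤ L (bⁿ⁺¹) < (n + 1) · L b`.
-/

theorem monotoneOn_of_rightInvOn_pos {α β : Type*} [LinearOrder α] [Preorder β] [Zero β]
    {f : α → β} {g : β → α} (hf : StrictMono f) (hg : ∀ y, 0 < y → f (g y) = y) :
    MonotoneOn g (Set.Ioi 0) := fun y hy y' hy' hyy' => by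
  rw [← hf.le_iff_le, hg y hy, hg y' hy']
  exact hyy'

section OrderedField

variable {K : Type*} [Field K] [LinearOrder K] [IsStrictOrderedRing K]

theorem PosInf.pos {a : K} (ha : PosInf a) : 0 < a := by
  exact_mod_cast ha 0

theorem PosInf.one_lt {a : K} (ha : PosInf a) : 1 < a := by
  exact_mod_cast ha 1

theorem PosInf.natCast_sq_le {a : K} (ha : PosInf a) (n : ℕ) : (n : K) ^ 2 ≤ a := by
  exact_mod_cast (ha (n ^ 2)).le

theorem PosInf.le_pow_succ_of_le_natCast_mul_pow {a b : K} (hb : PosInf b) {k n : ℕ}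
    (h : a ≤ k * b ^ n) : a ≤ b ^ (n + 1) :=
  calc a ≤ k * b ^ n := h
    _ ≤ b * b ^ n := mul_le_mul_of_nonneg_right (hb k).le (pow_pos hb.pos n).le
    _ = b ^ (n + 1) := (pow_succ' b n).symm

namespace IsOTF

variable {e T L : K → K}

theorem e_one_lt_three (hKT : IsOTF e T) : e 1 < 3 := by
  have h := (abs_lt.mp (hKT.e_T1 1 (by norm_num) (by norm_num))).2
  norm_num at h
  linarith

theorem one_lt_L (hKT : IsOTF e T) (hL : ∀ y : K, 0 < y → T (L y) = y) {a : K}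
    (ha : PosInf a) : 1 < L a := by
  rw [← hKT.T_mono.lt_iff_lt, hL a ha.pos, hKT.T_eq_e 1 zero_le_one le_rfl]
  have : (3 : K) < a := by exact_mod_cast ha 3
  linarith [hKT.e_one_lt_three]

theorem L_pow_lt_mul (hKT : IsOTF e T) (hL : ∀ y : K, 0 < y → T (L y) = y) {a : K}
    (ha : PosInf a) {n : ℕ} (hn : 2 ≤ n) : L (a ^ n) < n * L a := by
  have hLa := hKT.one_lt_L hL ha
  have hn' : (2 : K) ≤ n := by exact_mod_cast hn
  rw [← hKT.T_mono.lt_iff_lt, hL _ (pow_pos ha.pos n)]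
  calc a ^ n < e a := hKT.e_GA n a (ha.natCast_sq_le n)
    _ = T (L a + 1) := by rw [hKT.T_succ (L a) (by linarith), hL a ha.pos]
    _ < T (n * L a) := hKT.T_mono (by nlinarith)

theorem L_le_L_pow (hKT : IsOTF e T) (hL : ∀ y : K, 0 < y → T (L y) = y) {a : K}
    (ha : PosInf a) {n : ℕ} (hn : n ≠ 0) : L a ≤ L (a ^ n) :=
  monotoneOn_of_rightInvOn_pos hKT.T_mono hL ha.pos (pow_pos ha.pos n)
    (le_self_pow₀ ha.one_lt.le hn)

theorem veq_L_pow_L (hKT : IsOTF e T) (hL : ∀ y : K, 0 < y → T (L y) = y) {a : K}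
    (ha : PosInf a) {n : ℕ} (hn : 2 ≤ n) : VEq (L (a ^ n)) (L a) := by
  have hlt := hKT.L_pow_lt_mul hL ha hn
  have hle := hKT.L_le_L_pow hL ha (n := n) (by omega)
  have hLa := hKT.one_lt_L hL ha
  have hn' : (2 : K) ≤ n := by exact_mod_cast hn
  exact ⟨n, hlt.le, by nlinarith⟩

theorem L_lt_mul_L_of_le_natCast_mul_pow (hKT : IsOTF e T) (hL : ∀ y : K, 0 < y → T (L y) = y)
    {a b : K} (ha : PosInf a) (hb : PosInf b) {k n : ℕ} (h : a ≤ k * b ^ n) :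
    L a < (n + 1 : ℕ) * L b := by
  have hn : n ≠ 0 := by
    rintro rfl
    exact (ha k).not_ge (by simpa using h)
  calc L a ≤ L (b ^ (n + 1)) :=
        monotoneOn_of_rightInvOn_pos hKT.T_mono hL ha.pos (pow_pos hb.pos _)
          (hb.le_pow_succ_of_le_natCast_mul_pow h)
    _ < (n + 1 : ℕ) * L b := hKT.L_pow_lt_mul hL hb (by omega)

end IsOTF

end OrderedField

theorem stmt_17_general {K : Type*} [Field K] [LinearOrder K] [IsStrictOrderedRing K] (e T L : K → K)
    (hKT : IsOTF e T)
    (hL₂ : ∀ y : K, 0 < y → T (L y) = y) :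
    (∀ a : K, PosInf a → ∀ n : ℕ, 2 ≤ n →
      L (a ^ n) < (n : K) * L a ∧ VEq (L (a ^ n)) (L a)) ∧
    (∀ a b : K, PosInf a → PosInf b →
      (∃ n k : ℕ, a ≤ (k : K) * b ^ n ∧ b ≤ (k : K) * a ^ n) →
      VEq (L a) (L b)) := by
  refine ⟨fun a ha n hn => ⟨hKT.L_pow_lt_mul hL₂ ha hn, hKT.veq_L_pow_L hL₂ ha hn⟩, ?_⟩
  rintro a b ha hb ⟨n, k, hab, hba⟩
  exact ⟨n + 1, (hKT.L_lt_mul_L_of_le_natCast_mul_pow hL₂ ha hb hab).le,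
    (hKT.L_lt_mul_L_of_le_natCast_mul_pow hL₂ hb ha hba).le⟩

/-- For every positive infinite a and n ≥ 2 one has n·L(a) > L(aⁿ), hence
X_T(n·v(a)) = X_T(v(a)), i.e. v(L(aⁿ)) = v(L(a)); consequently X_T is constant
on archimedean classes of the value group: if v(a) and v(b) are archimedean
equivalent (∃ n k, a ≤ k·bⁿ and b ≤ k·aⁿ), then v(L(a)) = v(L(b)). -/
theorem stmt_17 {K : Type*} [Field K] [LinearOrder K] [IsStrictOrderedRing K] (e T L : K → K)
    (hKT : IsOTF e T) (nonarch : ∃ z : K, PosInf z)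
    (hL₁ : ∀ x : K, L (T x) = x) (hL₂ : ∀ y : K, 0 < y → T (L y) = y) :
    (∀ a : K, PosInf a → ∀ n : ℕ, 2 ≤ n →
      L (a ^ n) < (n : K) * L a ∧ VEq (L (a ^ n)) (L a)) ∧
    (∀ a b : K, PosInf a → PosInf b →
      (∃ n k : ℕ, a ≤ (k : K) * b ^ n ∧ b ≤ (k : K) * a ^ n) →
      VEq (L a) (L b)) :=
  stmt_17_general e T L hKT hL₂
end
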